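/- arXiv:2403.11493 — 5 statements merged into one kernel-verified Lean document; each statement's English description precedes it below -/
import Mathlib

section
/- Let J : H → H be firmly non-expansive, B : H → H monotone and L-Lipschitz, and λ, β > 0 with λβL < 1. Define C := I - λβB and h(x) := C(J(Cx)) - Cx. Then ‖h(x) - h(y)‖ ≤ √6 ‖x - y‖ for all x, y ∈ H. -/
open RealInnerProductSpace

/-!
Write `C = I - tB` with `t = λβ` and `s = tL < 1`. Monotonicity of `B` kills the cross term in
`‖Cx - Cy‖²`, so `C` is `√(1 + s²)`-Lipschitz. With `u = Cx`, `v = Cy`, `p = Ju - Jv`, `q = u - v`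
and `r = t (B(Ju) - B(Jv))` one has `h x - h y = p - q - r`; firm non-expansiveness
(`‖p‖² ≤ ⟪q, p⟫`), monotonicity (`⟪p, r⟫ ≥ 0`) and `‖r‖ ≤ s‖p‖ ≤ s‖q‖` give
`‖p - q - r‖² ≤ (1 + 2s)‖q‖²`. Finally `(1 + 2s)(1 + s²) ≤ 6` for `0 ≤ s ≤ 1`.
-/

section InnerProductSpace

variable {H : Type*} [NormedAddCommGroup H] [InnerProductSpace ℝ H]

lemma norm_le_of_sq_le_inner {p q : H} (hp : ‖p‖ ^ 2 ≤ ⟪q, p⟫) : ‖p‖ ≤ ‖q‖ := by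
  nlinarith [real_inner_le_norm q p, norm_nonneg p, norm_nonneg q]

lemma norm_sub_sq_le_of_inner_nonneg {d e : H} {s : ℝ} (hde : 0 ≤ ⟪d, e⟫)
    (he : ‖e‖ ≤ s * ‖d‖) : ‖d - e‖ ^ 2 ≤ (1 + s ^ 2) * ‖d‖ ^ 2 := by
  have he2 : ‖e‖ ^ 2 ≤ (s * ‖d‖) ^ 2 := pow_le_pow_left₀ (norm_nonneg e) he 2
  rw [norm_sub_sq_real]
  nlinarith

lemma norm_sub_sub_sq_le {p q r : H} {s : ℝ} (hs₀ : 0 ≤ s) (hs₁ : s ≤ 1)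
    (hpq : ‖p‖ ^ 2 ≤ ⟪q, p⟫) (hpr : 0 ≤ ⟪p, r⟫) (hr : ‖r‖ ≤ s * ‖p‖) :
    ‖p - q - r‖ ^ 2 ≤ (1 + 2 * s) * ‖q‖ ^ 2 := by
  have hp_le_q : ‖p‖ ≤ ‖q‖ := norm_le_of_sq_le_inner hpq
  have hr_le_q : ‖r‖ ≤ s * ‖q‖ := hr.trans (mul_le_mul_of_nonneg_left hp_le_q hs₀)
  have hqr : ⟪q, r⟫ ≤ s * ‖q‖ ^ 2 :=
    calc ⟪q, r⟫ ≤ ‖q‖ * ‖r‖ := real_inner_le_norm q r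
      _ ≤ ‖q‖ * (s * ‖q‖) := mul_le_mul_of_nonneg_left hr_le_q (norm_nonneg q)
      _ = s * ‖q‖ ^ 2 := by ring
  have hr2 : ‖r‖ ^ 2 ≤ ‖p‖ ^ 2 := by
    have : s * ‖p‖ ≤ ‖p‖ := mul_le_of_le_one_left (norm_nonneg p) hs₁
    exact pow_le_pow_left₀ (norm_nonneg r) (hr.trans this) 2
  rw [norm_sub_sq_real, norm_sub_sq_real, inner_sub_left, real_inner_comm q p]
  linarith

variable {B : H → H} {L t : ℝ}

lemma inner_sub_smul_sub_nonneg (hB : ∀ x y : H, 0 ≤ ⟪B x - B y, x - y⟫) (ht : 0 ≤ t)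
    (x y : H) : 0 ≤ ⟪x - y, t • (B x - B y)⟫ := by
  rw [real_inner_smul_right, real_inner_comm]
  exact mul_nonneg ht (hB x y)

lemma norm_smul_sub_le (hB : ∀ x y : H, ‖B x - B y‖ ≤ L * ‖x - y‖) (ht : 0 ≤ t) (x y : H) :
    ‖t • (B x - B y)‖ ≤ t * L * ‖x - y‖ := by
  rw [norm_smul, Real.norm_of_nonneg ht, mul_assoc]
  exact mul_le_mul_of_nonneg_left (hB x y) ht

end InnerProductSpace

lemma one_add_two_mul_mul_one_add_sq_le_six {s : ℝ} (hs₀ : 0 ≤ s) (hs₁ : s ≤ 1) :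
    (1 + 2 * s) * (1 + s ^ 2) ≤ 6 := by
  nlinarith [mul_le_mul hs₁ hs₁ hs₀ zero_le_one]

theorem fbf_operator_sqrt6_lipschitz
    {H : Type*} [NormedAddCommGroup H] [InnerProductSpace ℝ H]
    (J : H → H) (hJ : ∀ x y : H, ‖J x - J y‖ ^ 2 ≤ ⟪x - y, J x - J y⟫)
    (B : H → H) (hBmono : ∀ x y : H, 0 ≤ ⟪B x - B y, x - y⟫)
    (L : ℝ) (hLpos : 0 < L) (hB : ∀ x y : H, ‖B x - B y‖ ≤ L * ‖x - y‖)
    (lam beta : ℝ) (hlam : 0 < lam) (hbeta : 0 < beta) (hlb : lam * beta * L < 1)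
    (C : H → H) (hC : ∀ x : H, C x = x - (lam * beta) • B x)
    (h : H → H) (hh : ∀ x : H, h x = C (J (C x)) - C x) :
    ∀ x y : H, ‖h x - h y‖ ≤ Real.sqrt 6 * ‖x - y‖ := by
  intro x y
  set t := lam * beta
  have ht : 0 ≤ t := (mul_pos hlam hbeta).le
  have hs₀ : 0 ≤ t * L := mul_nonneg ht hLpos.le
  have hCxy : C x - C y = (x - y) - t • (B x - B y) := by
    simp only [hC, smul_sub]; abel
  have hhxy : h x - h y =
      (J (C x) - J (C y)) - (C x - C y) - t • (B (J (C x)) - B (J (C y))) := by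
    simp only [hh, hC (J (C x)), hC (J (C y)), smul_sub]; abel
  set u := C x
  set v := C y
  have hforward : ‖u - v‖ ^ 2 ≤ (1 + (t * L) ^ 2) * ‖x - y‖ ^ 2 := by
    rw [hCxy]
    exact norm_sub_sq_le_of_inner_nonneg (inner_sub_smul_sub_nonneg hBmono ht x y)
      (norm_smul_sub_le hB ht x y)
  have hbackward : ‖h x - h y‖ ^ 2 ≤ (1 + 2 * (t * L)) * ‖u - v‖ ^ 2 := by
    rw [hhxy]
    exact norm_sub_sub_sq_le hs₀ hlb.le (hJ u v) (inner_sub_smul_sub_nonneg hBmono ht _ _)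
      (norm_smul_sub_le hB ht _ _)
  have hsq : ‖h x - h y‖ ^ 2 ≤ (Real.sqrt 6 * ‖x - y‖) ^ 2 := by
    rw [mul_pow, Real.sq_sqrt (by norm_num : (0 : ℝ) ≤ 6)]
    calc ‖h x - h y‖ ^ 2 ≤ (1 + 2 * (t * L)) * ((1 + (t * L) ^ 2) * ‖x - y‖ ^ 2) :=
          hbackward.trans (mul_le_mul_of_nonneg_left hforward (by positivity))
      _ = (1 + 2 * (t * L)) * (1 + (t * L) ^ 2) * ‖x - y‖ ^ 2 := by ring
      _ ≤ 6 * ‖x - y‖ ^ 2 := mul_le_mul_of_nonneg_right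
          (one_add_two_mul_mul_one_add_sq_le_six hs₀ hlb.le) (sq_nonneg _)
  exact le_of_pow_le_pow_left₀ two_ne_zero (by positivity) hsq
end

section
/- Let J : H → H be firmly non-expansive, B : H → H be L-Lipschitz, and λ, β > 0. With C := I - λβB, one has ‖C(J(Cx)) - C(J(Cy))‖² ≤ (1 + λ²β²L²)⟨Cx - Cy, J(Cx) - J(Cy)⟩ - 2λβ⟨J(Cx) - J(Cy), B(J(Cx)) - B(J(Cy))⟩ for all x, y ∈ H. -/
open RealInnerProductSpace

section

variable {H : Type*} [NormedAddCommGroup H] [InnerProductSpace ℝ H]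

theorem norm_sub_smul_sq (u v : H) (t : ℝ) :
    ‖u - t • v‖ ^ 2 = ‖u‖ ^ 2 - 2 * t * ⟪u, v⟫ + t ^ 2 * ‖v‖ ^ 2 := by
  rw [norm_sub_sq_real, norm_smul, real_inner_smul_right, mul_pow, Real.norm_eq_abs, sq_abs]
  ring

/-- Applied with `u = J a - J b`, `v = B (J a) - B (J b)`, `w = a - b`: the `t² ‖v‖²` term is
absorbed first by the Lipschitz bound, then by firm non-expansiveness. -/
theorem norm_sub_smul_sq_le {u v w : H} {L : ℝ} (t : ℝ)
    (hu : ‖u‖ ^ 2 ≤ ⟪w, u⟫) (hv : ‖v‖ ≤ L * ‖u‖) :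
    ‖u - t • v‖ ^ 2 ≤ (1 + t ^ 2 * L ^ 2) * ⟪w, u⟫ - 2 * t * ⟪u, v⟫ := by
  have hv_sq : ‖v‖ ^ 2 ≤ L ^ 2 * ‖u‖ ^ 2 := by
    rw [← mul_pow]
    exact pow_le_pow_left₀ (norm_nonneg v) hv 2
  have ht : 0 ≤ t ^ 2 := sq_nonneg t
  have hL : 0 ≤ t ^ 2 * L ^ 2 := by positivity
  rw [norm_sub_smul_sq]
  nlinarith [mul_le_mul_of_nonneg_left hv_sq ht, mul_le_mul_of_nonneg_left hu hL]

end

theorem fbf_composition_estimate_general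
    {H : Type*} [NormedAddCommGroup H] [InnerProductSpace ℝ H]
    (J : H → H) (hJ : ∀ x y : H, ‖J x - J y‖ ^ 2 ≤ ⟪x - y, J x - J y⟫)
    (B : H → H) (L : ℝ) (hB : ∀ x y : H, ‖B x - B y‖ ≤ L * ‖x - y‖)
    (lam beta : ℝ)
    (C : H → H) (hC : ∀ x : H, C x = x - (lam * beta) • B x) :
    ∀ x y : H, ‖C (J (C x)) - C (J (C y))‖ ^ 2
      ≤ (1 + lam ^ 2 * beta ^ 2 * L ^ 2) * ⟪C x - C y, J (C x) - J (C y)⟫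
        - 2 * (lam * beta) * ⟪J (C x) - J (C y), B (J (C x)) - B (J (C y))⟫ := by
  intro x y
  have hC_sub : ∀ a b : H, C a - C b = (a - b) - (lam * beta) • (B a - B b) := by
    intro a b
    rw [hC, hC, smul_sub]
    abel
  rw [hC_sub, ← mul_pow]
  exact norm_sub_smul_sq_le _ (hJ _ _) (hB _ _)

theorem fbf_composition_estimate
    {H : Type*} [NormedAddCommGroup H] [InnerProductSpace ℝ H]
    (J : H → H) (hJ : ∀ x y : H, ‖J x - J y‖ ^ 2 ≤ ⟪x - y, J x - J y⟫)
    (B : H → H) (L : ℝ) (hB : ∀ x y : H, ‖B x - B y‖ ≤ L * ‖x - y‖)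
    (lam beta : ℝ) (hlam : 0 < lam) (hbeta : 0 < beta)
    (C : H → H) (hC : ∀ x : H, C x = x - (lam * beta) • B x) :
    ∀ x y : H, ‖C (J (C x)) - C (J (C y))‖ ^ 2
      ≤ (1 + lam ^ 2 * beta ^ 2 * L ^ 2) * ⟪C x - C y, J (C x) - J (C y)⟫
        - 2 * (lam * beta) * ⟪J (C x) - J (C y), B (J (C x)) - B (J (C y))⟫ :=
  fbf_composition_estimate_general J hJ B L hB lam beta C hC
end

section
/- Let f : K × K → ℝ be an upper hemicontinuous equilibrium bifunction (f(x,x)=0, f(x,·) convex and lower semicontinuous, and lim_{t→0⁺} f(tz+(1-t)x, y) ≤ f(x,y)). If x ∈ K satisfies f(y,x) ≤ 0 for all y ∈ K, then f(x,y) ≥ 0 for all y ∈ K. -/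
/-!
Minty-type argument: for `z = t y + (1 - t) x` with `t ∈ (0, 1)`, convexity of `f z` and
`f z z = 0` give `0 ≤ t f(z, y) + (1 - t) f(z, x)`, and `f(z, x) ≤ 0` by hypothesis, so
`f(z, y) ≥ 0`. Letting `t → 0⁺`, upper hemicontinuity carries this to `f(x, y) ≥ 0`.
-/

open Filter

theorem ConvexOn.nonneg_of_eq_zero_of_nonpos {H : Type*} [AddCommGroup H] [Module ℝ H]
    {K : Set H} {g : H → ℝ} (hg : ConvexOn ℝ K g) {x y : H} (hx : x ∈ K) (hy : y ∈ K)
    {t : ℝ} (ht₀ : 0 < t) (ht₁ : t ≤ 1) (hz : g (t • y + (1 - t) • x) = 0) (hgx : g x ≤ 0) :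
    0 ≤ g y := by
  have hconv := hg.2 hy hx ht₀.le (sub_nonneg.2 ht₁) (add_sub_cancel t 1)
  rw [hz, smul_eq_mul, smul_eq_mul] at hconv
  nlinarith [mul_nonneg (sub_nonneg.2 ht₁) (neg_nonneg.2 hgx)]

-- Unbounded `limsup`s in `ℝ` take the junk value `0`, so no boundedness hypothesis is needed.
theorem Real.limsup_nonneg_of_eventually_nonneg {α : Type*} {l : Filter α} [l.NeBot]
    {u : α → ℝ} (hu : ∀ᶠ a in l, 0 ≤ u a) : 0 ≤ limsup u l := by
  by_cases hb : IsBoundedUnder (· ≤ ·) l u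
  · exact le_limsup_of_frequently_le hu.frequently hb
  · exact (Real.limsup_of_not_isBoundedUnder hb).ge

theorem dep_solution_solves_ep_general
    {H : Type*} [NormedAddCommGroup H] [InnerProductSpace ℝ H]
    (K : Set H) (hKconv : Convex ℝ K)
    (f : H → H → ℝ)
    (heq : ∀ x ∈ K, f x x = 0)
    (hconv : ∀ x ∈ K, ConvexOn ℝ K (f x))
    (hhemi : ∀ x₁ ∈ K, ∀ x₂ ∈ K, ∀ y ∈ K,
      Filter.limsup (fun t : ℝ => f (t • x₁ + (1 - t) • x₂) y) (nhdsWithin 0 (Set.Ioi 0))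
        ≤ f x₂ y)
    (x : H) (hx : x ∈ K) (hDEP : ∀ y ∈ K, f y x ≤ 0) :
    ∀ y ∈ K, 0 ≤ f x y := by
  intro y hy
  have hsegment : ∀ t ∈ Set.Ioo (0 : ℝ) 1, 0 ≤ f (t • y + (1 - t) • x) y := by
    rintro t ⟨ht₀, ht₁⟩
    have hz : t • y + (1 - t) • x ∈ K :=
      hKconv hy hx ht₀.le (sub_nonneg.2 ht₁.le) (add_sub_cancel t 1)
    exact (hconv _ hz).nonneg_of_eq_zero_of_nonpos hx hy ht₀ ht₁.le (heq _ hz) (hDEP _ hz)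
  have hnear : ∀ᶠ t in nhdsWithin (0 : ℝ) (Set.Ioi 0), 0 ≤ f (t • y + (1 - t) • x) y :=
    eventually_of_mem (Ioo_mem_nhdsGT one_pos) hsegment
  exact (Real.limsup_nonneg_of_eventually_nonneg hnear).trans (hhemi y hy x hx y hy)

theorem dep_solution_solves_ep
    {H : Type*} [NormedAddCommGroup H] [InnerProductSpace ℝ H]
    (K : Set H) (hK : K.Nonempty) (hKc : IsClosed K) (hKconv : Convex ℝ K)
    (f : H → H → ℝ)
    (heq : ∀ x ∈ K, f x x = 0)
    (hconv : ∀ x ∈ K, ConvexOn ℝ K (f x))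
    (hlsc : ∀ x ∈ K, LowerSemicontinuousOn (f x) K)
    (hhemi : ∀ x₁ ∈ K, ∀ x₂ ∈ K, ∀ y ∈ K,
      Filter.limsup (fun t : ℝ => f (t • x₁ + (1 - t) • x₂) y) (nhdsWithin 0 (Set.Ioi 0))
        ≤ f x₂ y)
    (x : H) (hx : x ∈ K) (hDEP : ∀ y ∈ K, f y x ≤ 0) :
    ∀ y ∈ K, 0 ≤ f x y :=
  dep_solution_solves_ep_general K hKconv f heq hconv hhemi x hx hDEP
end

section
/- (Discrete Opial lemma) Let C be a nonempty subset of a real Hilbert space H and (x_n) a sequence in H such that (i) for every x ∈ C the limit lim_{n→∞} ‖x_n - x‖ exists, and (ii) every weak sequential cluster point of (x_n) belongs to C. Then (x_n) converges weakly to a point of C. -/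
/-!
A bounded sequence in a Hilbert space has a weakly convergent subsequence (sequential
Banach–Alaoglu on the closed span of the sequence, which is separable), and the sequence is
bounded because `‖x n - u‖` converges for some `u ∈ C`. Opial's argument shows the weak cluster
point is unique: if `a, b ∈ C` are two of them, then
`2⟪x n, a - b⟫ = ‖x n - b‖² - ‖x n - a‖² + ‖a‖² - ‖b‖²` converges, so its limit equals both
`2⟪a, a - b⟫` and `2⟪b, a - b⟫`, whence `‖a - b‖² = 0`. A bounded sequence with a unique weak
cluster point converges weakly to it.
-/

open Filter Topology RealInnerProductSpace

theorem exists_norm_le_of_tendsto_norm_sub {E : Type*} [SeminormedAddCommGroup E] {x : ℕ → E}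
    {u : E} {l : ℝ} (h : Tendsto (fun n => ‖x n - u‖) atTop (𝓝 l)) : ∃ M, ∀ n, ‖x n‖ ≤ M := by
  obtain ⟨B, hB⟩ := h.bddAbove_range
  exact ⟨B + ‖u‖, fun n => (norm_le_norm_sub_add (x n) u).trans (by gcongr; exact hB ⟨n, rfl⟩)⟩

section

variable {H : Type*} [NormedAddCommGroup H] [InnerProductSpace ℝ H]

def TendstoWeakly (x : ℕ → H) (z : H) : Prop :=
  ∀ y : H, Tendsto (fun n => ⟪x n, y⟫) atTop (𝓝 ⟪z, y⟫)

def IsWeakClusterPt (x : ℕ → H) (z : H) : Prop :=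
  ∃ φ : ℕ → ℕ, StrictMono φ ∧ TendstoWeakly (x ∘ φ) z

theorem exists_isWeakClusterPt_of_separableSpace [CompleteSpace H]
    [TopologicalSpace.SeparableSpace H] {x : ℕ → H} {M : ℝ} (hM : ∀ n, ‖x n‖ ≤ M) :
    ∃ z, IsWeakClusterPt x z := by
  let f : ℕ → WeakDual ℝ H := fun n => StrongDual.toWeakDual (innerSL ℝ (x n))
  have hf : ∀ n, f n ∈ WeakDual.toStrongDual ⁻¹' Metric.closedBall 0 M := fun n => by
    simpa [f] using hM n
  obtain ⟨ℓ, -, φ, hφ, hlim⟩ := WeakDual.isSeqCompact_closedBall ℝ H 0 M hf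
  refine ⟨(InnerProductSpace.toDual ℝ H).symm (WeakDual.toStrongDual ℓ), φ, hφ, fun y => ?_⟩
  rw [InnerProductSpace.toDual_symm_apply]
  exact (WeakDual.eval_continuous y).continuousAt.tendsto.comp hlim

theorem TendstoWeakly.of_forall_mem_submodule (K : Submodule ℝ H) [K.HasOrthogonalProjection]
    {x : ℕ → H} {z : H} (hx : ∀ n, x n ∈ K) (hz : z ∈ K)
    (h : ∀ v ∈ K, Tendsto (fun n => ⟪x n, v⟫) atTop (𝓝 ⟪z, v⟫)) : TendstoWeakly x z := by
  intro y
  have hproj : ∀ w ∈ K, ⟪w, y⟫ = ⟪w, K.starProjection y⟫ := fun w hw => by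
    rw [← K.inner_starProjection_left_eq_right, K.starProjection_eq_self_iff.2 hw]
  simpa only [hproj _ (hx _), hproj z hz] using h _ (K.starProjection_apply_mem y)

theorem exists_isWeakClusterPt_of_bounded [CompleteSpace H] {x : ℕ → H} {M : ℝ}
    (hM : ∀ n, ‖x n‖ ≤ M) : ∃ z, IsWeakClusterPt x z := by
  set K := (Submodule.span ℝ (Set.range x)).topologicalClosure
  have hxK : ∀ n, x n ∈ K := fun n =>
    Submodule.le_topologicalClosure _ (Submodule.subset_span (Set.mem_range_self n))
  have : CompleteSpace K := (Submodule.isClosed_topologicalClosure _).completeSpace_coe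
  have : TopologicalSpace.SeparableSpace K := by
    have := (Set.countable_range x).isSeparable.span (R := ℝ) |>.closure
    rw [← Submodule.topologicalClosure_coe] at this
    exact this.separableSpace
  obtain ⟨z, φ, hφ, hz⟩ :=
    exists_isWeakClusterPt_of_separableSpace (x := fun n => (⟨x n, hxK n⟩ : K)) hM
  exact ⟨z, φ, hφ, .of_forall_mem_submodule K (fun n => hxK _) z.2 fun v hv => hz ⟨v, hv⟩⟩

theorem tendstoWeakly_of_forall_isWeakClusterPt_eq [CompleteSpace H] {x : ℕ → H} {M : ℝ}
    (hM : ∀ n, ‖x n‖ ≤ M) {z : H} (h : ∀ z', IsWeakClusterPt x z' → z' = z) :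
    TendstoWeakly x z := by
  intro y
  refine tendsto_of_subseq_tendsto fun ns hns => ?_
  obtain ⟨ψ, -, hnsψ⟩ := strictMono_subseq_of_tendsto_atTop hns
  obtain ⟨z', φ, hφ, hz'⟩ := exists_isWeakClusterPt_of_bounded (x := x ∘ ns ∘ ψ) fun n => hM _
  obtain rfl := h z' ⟨ns ∘ ψ ∘ φ, hnsψ.comp hφ, hz'⟩
  exact ⟨ψ ∘ φ, hz' y⟩

theorem IsWeakClusterPt.inner_eq_of_tendsto {x : ℕ → H} {z w : H} {L : ℝ}
    (hz : IsWeakClusterPt x z) (hL : Tendsto (fun n => ⟪x n, w⟫) atTop (𝓝 L)) : ⟪z, w⟫ = L :=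
  let ⟨_, hφ, hzφ⟩ := hz
  tendsto_nhds_unique (hzφ w) (hL.comp hφ.tendsto_atTop)

theorem tendsto_inner_sub_of_tendsto_norm_sub {x : ℕ → H} {a b : H} {la lb : ℝ}
    (ha : Tendsto (fun n => ‖x n - a‖) atTop (𝓝 la))
    (hb : Tendsto (fun n => ‖x n - b‖) atTop (𝓝 lb)) :
    Tendsto (fun n => ⟪x n, a - b⟫) atTop (𝓝 ((lb ^ 2 - la ^ 2 + ‖a‖ ^ 2 - ‖b‖ ^ 2) / 2)) := by
  have polarization :
      ∀ n, ⟪x n, a - b⟫ = (‖x n - b‖ ^ 2 - ‖x n - a‖ ^ 2 + ‖a‖ ^ 2 - ‖b‖ ^ 2) / 2 := by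
    intro n
    rw [inner_sub_right, norm_sub_sq_real, norm_sub_sq_real]
    ring
  simp only [polarization]
  exact ((((hb.pow 2).sub (ha.pow 2)).add_const _).sub_const _).div_const 2

theorem IsWeakClusterPt.eq_of_tendsto_norm_sub {x : ℕ → H} {a b : H} {la lb : ℝ}
    (ha : IsWeakClusterPt x a) (hb : IsWeakClusterPt x b)
    (hla : Tendsto (fun n => ‖x n - a‖) atTop (𝓝 la))
    (hlb : Tendsto (fun n => ‖x n - b‖) atTop (𝓝 lb)) : a = b := by
  have hlim := tendsto_inner_sub_of_tendsto_norm_sub hla hlb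
  have hself : ⟪a - b, a - b⟫ = 0 := by
    rw [inner_sub_left, ha.inner_eq_of_tendsto hlim, hb.inner_eq_of_tendsto hlim, sub_self]
  rwa [inner_self_eq_zero, sub_eq_zero] at hself

end

theorem discrete_opial_lemma
    {H : Type*} [NormedAddCommGroup H] [InnerProductSpace ℝ H] [CompleteSpace H]
    (C : Set H) (hC : C.Nonempty) (x : ℕ → H)
    (h1 : ∀ u ∈ C, ∃ l : ℝ, Tendsto (fun n => ‖x n - u‖) atTop (nhds l))
    (h2 : ∀ z : H, (∃ φ : ℕ → ℕ, StrictMono φ ∧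
        ∀ y : H, Tendsto (fun k => ⟪x (φ k), y⟫) atTop (nhds ⟪z, y⟫)) → z ∈ C) :
    ∃ xinf ∈ C, ∀ y : H, Tendsto (fun n => ⟪x n, y⟫) atTop (nhds ⟪xinf, y⟫) := by
  obtain ⟨u, hu⟩ := hC
  obtain ⟨M, hM⟩ := exists_norm_le_of_tendsto_norm_sub (h1 u hu).choose_spec
  obtain ⟨z, hz⟩ := exists_isWeakClusterPt_of_bounded hM
  refine ⟨z, h2 z hz, tendstoWeakly_of_forall_isWeakClusterPt_eq hM fun z' hz' => ?_⟩
  exact hz'.eq_of_tendsto_norm_sub hz (h1 z' (h2 z' hz')).choose_spec (h1 z (h2 z hz)).choose_spec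
end

section
/- Let B : H → H be monotone and L-Lipschitz, g a monotone equilibrium bifunction on K with resolvent J_λ^g, and λ, β > 0 with λβL < 1. Fix x ∈ K, set y := J_λ^g(x - λβ B x) and x⁺ := y + λβ(Bx - By). Then for every u ∈ K, ‖x⁺ - u‖² - ‖x - u‖² ≤ 2λ g(y, u) + 2λβ⟨By, u - y⟩ - (1 - λ²β²L²)‖x - y‖². -/
/-!
Write `x⁺ - x = (y - x) + λβ(Bx - By)`. Comparing `‖x⁺ - u‖²` and `‖x - u‖²` through the
common point `y` leaves the cross term `2⟪x - x⁺, u - y⟫` together with `‖x⁺ - y‖² - ‖x - y‖²`.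
The cross term splits into the resolvent term `2⟪(x - λβBx) - y, u - y⟫ ≤ 2λ g(y, u)` and the
forward term `2λβ⟪By, u - y⟫`, while `‖x⁺ - y‖ = λβ‖Bx - By‖ ≤ λβL‖x - y‖` by the Lipschitz bound.
-/

open RealInnerProductSpace

section

variable {H : Type*} [NormedAddCommGroup H] [InnerProductSpace ℝ H]

theorem norm_sub_sq_sub_norm_sub_sq (x y z u : H) :
    ‖z - u‖ ^ 2 - ‖x - u‖ ^ 2 = 2 * ⟪x - z, u - y⟫ + ‖z - y‖ ^ 2 - ‖x - y‖ ^ 2 := by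
  have hz : z - u = (z - y) + (y - u) := by abel
  have hx : x - u = (x - y) + (y - u) := by abel
  have hxz : x - z = (x - y) - (z - y) := by abel
  have huy : u - y = -(y - u) := by abel
  rw [hz, hx, hxz, huy, norm_add_sq_real, norm_add_sq_real, inner_neg_right,
    inner_sub_left (x - y) (z - y)]
  ring

theorem inner_sub_le_of_nonneg_add_inv_mul_inner {lam c : ℝ} {w y v : H} (hlam : 0 < lam)
    (h : 0 ≤ c + 1 / lam * ⟪y - w, v - y⟫) : ⟪w - y, v - y⟫ ≤ lam * c := by
  have hneg : ⟪w - y, v - y⟫ = -⟪y - w, v - y⟫ := by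
    rw [← inner_neg_left, neg_sub]
  have hmul := mul_nonneg hlam.le h
  rw [mul_add, ← mul_assoc, mul_one_div_cancel hlam.ne', one_mul] at hmul
  linarith

theorem norm_smul_sq_le_of_norm_le {s r : ℝ} {d : H} (h : ‖d‖ ≤ r) :
    ‖s • d‖ ^ 2 ≤ s ^ 2 * r ^ 2 := by
  rw [norm_smul, mul_pow, Real.norm_eq_abs, sq_abs]
  gcongr

end

theorem fbf_one_step_estimate_general
    {H : Type*} [NormedAddCommGroup H] [InnerProductSpace ℝ H]
    (K : Set H)
    (B : H → H)
    (L : ℝ) (hBlip : ∀ a b : H, ‖B a - B b‖ ≤ L * ‖a - b‖)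
    (g : H → H → ℝ)
    (lam beta : ℝ) (hlam : 0 < lam)
    (x : H)
    (y : H)
    (hy : ∀ v ∈ K, 0 ≤ g y v + (1 / lam) * ⟪y - (x - (lam * beta) • B x), v - y⟫)
    (xplus : H) (hxplus : xplus = y + (lam * beta) • (B x - B y)) :
    ∀ u ∈ K, ‖xplus - u‖ ^ 2 - ‖x - u‖ ^ 2
      ≤ 2 * lam * g y u + 2 * lam * beta * ⟪B y, u - y⟫
        - (1 - lam ^ 2 * beta ^ 2 * L ^ 2) * ‖x - y‖ ^ 2 := by
  intro u hu
  have hcross : x - xplus = (x - (lam * beta) • B x - y) + (lam * beta) • B y := by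
    rw [hxplus, smul_sub]; abel
  have hgap : xplus - y = (lam * beta) • (B x - B y) := by
    rw [hxplus, add_sub_cancel_left]
  have hres : ⟪x - (lam * beta) • B x - y, u - y⟫ ≤ lam * g y u :=
    inner_sub_le_of_nonneg_add_inv_mul_inner hlam (hy u hu)
  have hlip : ‖xplus - y‖ ^ 2 ≤ (lam * beta) ^ 2 * (L * ‖x - y‖) ^ 2 :=
    hgap ▸ norm_smul_sq_le_of_norm_le (hBlip x y)
  rw [norm_sub_sq_sub_norm_sub_sq x y xplus u, hcross, inner_add_left, real_inner_smul_left]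
  linear_combination 2 * hres + hlip

theorem fbf_one_step_estimate
    {H : Type*} [NormedAddCommGroup H] [InnerProductSpace ℝ H]
    (K : Set H) (hK : K.Nonempty) (hKc : IsClosed K) (hKconv : Convex ℝ K)
    (B : H → H) (hBmono : ∀ a b : H, 0 ≤ ⟪B a - B b, a - b⟫)
    (L : ℝ) (hLpos : 0 < L) (hBlip : ∀ a b : H, ‖B a - B b‖ ≤ L * ‖a - b‖)
    (g : H → H → ℝ)
    (hgmono : ∀ a ∈ K, ∀ b ∈ K, g a b + g b a ≤ 0)
    (hgeq : ∀ a ∈ K, g a a = 0)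
    (hgconv : ∀ a ∈ K, ConvexOn ℝ K (g a))
    (hglsc : ∀ a ∈ K, LowerSemicontinuousOn (g a) K)
    (lam beta : ℝ) (hlam : 0 < lam) (hbeta : 0 < beta) (hlb : lam * beta * L < 1)
    (x : H) (hx : x ∈ K)
    (y : H) (hyK : y ∈ K)
    (hy : ∀ v ∈ K, 0 ≤ g y v + (1 / lam) * ⟪y - (x - (lam * beta) • B x), v - y⟫)
    (xplus : H) (hxplus : xplus = y + (lam * beta) • (B x - B y)) :
    ∀ u ∈ K, ‖xplus - u‖ ^ 2 - ‖x - u‖ ^ 2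
      ≤ 2 * lam * g y u + 2 * lam * beta * ⟪B y, u - y⟫
        - (1 - lam ^ 2 * beta ^ 2 * L ^ 2) * ‖x - y‖ ^ 2 :=
  fbf_one_step_estimate_general K B L hBlip g lam beta hlam x y hy xplus hxplus
end
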